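/- arXiv:2405.17638 — 2 statements merged into one kernel-verified Lean document; each statement's English description precedes it below -/
import Mathlib

section
/- Assume P is irreducible. Fix k ∈ D, ℓ ∈ [n] with ℓ ≠ k, and i ∈ [n]. For ε ∈ ℝ set S^τ_ε = S^τ + ε(e_k e_ℓ^T − e_k e_k^T), let (S^τ_ε)_D be obtained from S^τ_ε by replacing every row and column with index in [n]∖D by zero, and for ε in a sufficiently small neighborhood of 0 let v_ε be the unique solution of (I − (S^τ_ε)_D) v = ∑_{t=0}^{τ−1} S^t R_D + (S^τ_ε − (S^τ_ε)_D) R_{D^c}, where R_{D^c}(i) = R(i)·1{i∉D}. Then v_0 = u, the map ε ↦ v_ε(i) is differentiable at ε = 0, and its derivative there equals (e_i^T (I − S_D^τ)^{-1} e_k)·(u(ℓ) − u(k)). -/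
/-! The value function is the Neumann series `u = ∑ₜ Qᵗ R` of the chain killed on leaving `D`
(`Q = killedMat P D`). Irreducibility and `D ≠ univ` give a power `Qᵐ` whose row sums are all
`< 1`; this makes the series converge, so that `u` satisfies the Bellman equation
`u = R_D + S u`, and, by a maximum principle, makes `I - S_D^τ` invertible since `S_D^τ ≤ Q^τ`
entrywise. Iterating the Bellman equation `τ` times, `u` solves the unperturbed system. The
perturbation `ε e_k (e_ℓ - e_k)ᵀ` only touches row `k ∈ D`, so the perturbed solution is exactly
`v_ε = u + ε (u ℓ - u k) (I - (S^τ_ε)_D)⁻¹ e_k`, and the derivative at `0` follows from the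
continuity of the matrix inverse. -/

open MeasureTheory Finset Filter
open scoped ENNReal NNReal ENat

noncomputable section

namespace RareTD

variable {n : ℕ}

/-- `P` is a row-stochastic matrix. -/
def IsStochastic (P : Matrix (Fin n) (Fin n) ℝ) : Prop :=
  (∀ i j, 0 ≤ P i j) ∧ ∀ i, ∑ j, P i j = 1

/-- Irreducibility of a nonnegative matrix. -/
def IsIrreducible (P : Matrix (Fin n) (Fin n) ℝ) : Prop :=
  ∀ i j, ∃ m : ℕ, 0 < m ∧ 0 < (P ^ m) i j

/-- `Pr i` is the law of the Markov chain with transition matrix `P` started at `i`,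
characterized by its finite-dimensional distributions. -/
def IsMarkovFamily (P : Matrix (Fin n) (Fin n) ℝ)
    (Pr : Fin n → Measure (ℕ → Fin n)) : Prop :=
  (∀ i, IsProbabilityMeasure (Pr i)) ∧
    ∀ (i : Fin n) (m : ℕ) (x : ℕ → Fin n),
      (Pr i {ω | ∀ t ≤ m, ω t = x t}).toReal =
        (if x 0 = i then 1 else 0) * ∏ t ∈ Finset.range m, P (x t) (x (t + 1))

/-- The matrix `S` of the chain stopped on exiting `D`. -/
def stopMat (P : Matrix (Fin n) (Fin n) ℝ) (D : Finset (Fin n)) :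
    Matrix (Fin n) (Fin n) ℝ :=
  fun i j => if i ∈ D then P i j else if i = j then 1 else 0

/-- Exit time `T = min {t ≥ 0 : ω t ∉ D}`, with value `⊤` if the path never leaves `D`. -/
def exitT (D : Finset (Fin n)) (ω : ℕ → Fin n) : ℕ∞ :=
  ⨅ (t : ℕ) (_ : ω t ∉ D), (t : ℕ∞)

/-- Hitting time of a set at positive times, `min {t > 0 : ω t ∈ A}`. -/
def hitT (A : Set (Fin n)) (ω : ℕ → Fin n) : ℕ∞ :=
  ⨅ (t : ℕ) (_ : 0 < t ∧ ω t ∈ A), (t : ℕ∞)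

/-- The stopped path `t ↦ X_{t ∧ T}`. -/
def stopped (D : Finset (Fin n)) (ω : ℕ → Fin n) : ℕ → Fin n
  | 0 => ω 0
  | t + 1 => if stopped D ω t ∈ D then ω (t + 1) else stopped D ω t

/-- `R_D`, the reward restricted to `D`. -/
def RD (D : Finset (Fin n)) (R : Fin n → ℝ) : Fin n → ℝ := fun i => if i ∈ D then R i else 0

/-- The value function `u(i) = E_i[∑_{t=0}^{T} R(X_t)]`, in `[0,∞]`. -/
def valueE (Pr : Fin n → Measure (ℕ → Fin n)) (D : Finset (Fin n)) (R : Fin n → ℝ)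
    (i : Fin n) : ℝ≥0∞ :=
  ∑' t : ℕ, ∫⁻ ω, Set.indicator {ω' : ℕ → Fin n | (t : ℕ∞) ≤ exitT D ω'}
      (fun ω' => ENNReal.ofReal (R (ω' t))) ω ∂(Pr i)

/-- The real-valued value function. -/
def valueR (Pr : Fin n → Measure (ℕ → Fin n)) (D : Finset (Fin n)) (R : Fin n → ℝ)
    (i : Fin n) : ℝ := (valueE Pr D R i).toReal

/-- Replace by `0` every row and column with index outside `D`. -/
def zeroD (D : Finset (Fin n)) (M : Matrix (Fin n) (Fin n) ℝ) : Matrix (Fin n) (Fin n) ℝ :=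
  fun i j => if i ∈ D ∧ j ∈ D then M i j else 0

/-- The asymptotic variance `σ_i²` of the LSTD estimator. -/
def avar (P : Matrix (Fin n) (Fin n) ℝ) (Pr : Fin n → Measure (ℕ → Fin n))
    (D : Finset (Fin n)) (R : Fin n → ℝ) (μ : Fin n → ℝ) (τ : ℕ) (i : Fin n) : ℝ :=
  ∑ k ∈ D, (μ k)⁻¹ * ((((1 : Matrix (Fin n) (Fin n) ℝ) - zeroD D (stopMat P D ^ τ))⁻¹) i k) ^ 2 *
    ∫ ω, (∑ t ∈ Finset.range τ, RD D R (stopped D ω t)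
        + valueR Pr D R (stopped D ω τ) - valueR Pr D R k) ^ 2 ∂(Pr k)

/-- Mean exit time `E_i[T] = ∑_{t≥0} P_i[T > t]`, in `[0,∞]`. -/
def meanExit (Pr : Fin n → Measure (ℕ → Fin n)) (D : Finset (Fin n)) (i : Fin n) : ℝ≥0∞ :=
  ∑' t : ℕ, Pr i {ω | (t : ℕ∞) < exitT D ω}

/-- The event `T_ℓ^τ < min (T_k^τ, T_{Dᶜ∖{ℓ}}^τ)` for the `τ`-step chain. -/
def Qset (D : Finset (Fin n)) (k ℓ : Fin n) : Set (ℕ → Fin n) :=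
  {ω | hitT {ℓ} ω < min (hitT {k} ω) (hitT ((D : Set (Fin n))ᶜ \ {ℓ}) ω)}

/-- Green's function of the `τ`-step chain: `E_i[∑_{t=0}^{T^τ-1} 1{Y_t^τ = k}]`. -/
def greenY (PrY : Fin n → Measure (ℕ → Fin n)) (D : Finset (Fin n)) (i k : Fin n) : ℝ≥0∞ :=
  ∑' t : ℕ, PrY i {ω | (t : ℕ∞) < exitT D ω ∧ ω t = k}

/-- Green's function of the chain: `E_ℓ[∑_{t=0}^{T} 1{X_t = j}]` (the sum includes `t = T`). -/
def greenX (Pr : Fin n → Measure (ℕ → Fin n)) (D : Finset (Fin n)) (ℓ j : Fin n) : ℝ≥0∞ :=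
  ∑' t : ℕ, Pr ℓ {ω | (t : ℕ∞) ≤ exitT D ω ∧ ω t = j}


/-- The solution `v_ε` of the perturbed Bellman system
`(I - (S^τ_ε)_D) v = ∑_{t<τ} S^t R_D + (S^τ_ε - (S^τ_ε)_D) R_{Dᶜ}`, where
`S^τ_ε = S^τ + ε (e_k e_ℓᵀ - e_k e_kᵀ)` (given by the matrix-inverse formula, which is the
unique solution whenever `I - (S^τ_ε)_D` is invertible, in particular for all `ε` in a
neighborhood of `0`). -/
def perturbedSol {n : ℕ} (P : Matrix (Fin n) (Fin n) ℝ) (D : Finset (Fin n))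
    (R : Fin n → ℝ) (τ : ℕ) (k ℓ : Fin n) (ε : ℝ) : Fin n → ℝ :=
  let Sτε : Matrix (Fin n) (Fin n) ℝ :=
    stopMat P D ^ τ + ε • (Matrix.single k ℓ (1 : ℝ) - Matrix.single k k 1)
  ((1 : Matrix (Fin n) (Fin n) ℝ) - zeroD D Sτε)⁻¹.mulVec
    ((fun a => ∑ t ∈ Finset.range τ, ((stopMat P D ^ t).mulVec (RD D R)) a)
      + Sτε.mulVec (fun a => if a ∈ D then 0 else R a)
      - (zeroD D Sτε).mulVec (fun a => if a ∈ D then 0 else R a))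

open scoped Matrix Topology

section NonnegMatrix

variable {ι : Type*} [Fintype ι]

lemma mulVec_le_mulVec {A : Matrix ι ι ℝ} (hA : ∀ i j, 0 ≤ A i j) {v w : ι → ℝ} (hvw : v ≤ w) :
    A *ᵥ v ≤ A *ᵥ w :=
  fun i => sum_le_sum fun j _ => mul_le_mul_of_nonneg_left (hvw j) (hA i j)

variable [DecidableEq ι]

lemma pow_apply_le_pow_apply {A B : Matrix ι ι ℝ} (hA : ∀ i j, 0 ≤ A i j)
    (hAB : ∀ i j, A i j ≤ B i j) (m : ℕ) (i j : ι) : (A ^ m) i j ≤ (B ^ m) i j := by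
  induction m generalizing j with
  | zero => rfl
  | succ m ih =>
    simp only [pow_succ, Matrix.mul_apply]
    exact sum_le_sum fun q _ => mul_le_mul (ih q) (hAB q j) (hA q j)
      (Matrix.pow_apply_nonneg (fun a b => (hA a b).trans (hAB a b)) m i q)

lemma mem_of_pow_apply_pos {A : Matrix ι ι ℝ} (hA : ∀ i j, 0 ≤ A i j) {C : Set ι}
    (hC : ∀ a ∈ C, ∀ b, 0 < A a b → b ∈ C) (m : ℕ) {i j : ι} (hi : i ∈ C)
    (hij : 0 < (A ^ m) i j) : j ∈ C := by
  induction m generalizing j with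
  | zero =>
    obtain rfl : i = j := by by_contra h; simp [Matrix.one_apply_ne h] at hij
    exact hi
  | succ m ih =>
    rw [pow_succ, Matrix.mul_apply] at hij
    have hAm := Matrix.pow_apply_nonneg hA m i
    obtain ⟨q, -, hq⟩ := (sum_pos_iff_of_nonneg fun q _ => mul_nonneg (hAm q) (hA q j)).1 hij
    refine hC q (ih ((hAm q).lt_of_ne ?_)) j ((hA q j).lt_of_ne ?_) <;>
      · rintro h
        simp [← h] at hq

/-- Maximum principle: at a coordinate where a fixed vector `v = N v = N ^ m v` is largest in
absolute value, `|v i| ≤ (N ^ m *ᵥ 1) i * |v i| < |v i|`. -/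
lemma det_one_sub_ne_zero {N : Matrix ι ι ℝ} (hN : ∀ i j, 0 ≤ N i j) (m : ℕ)
    (hm : ∀ i, (N ^ m *ᵥ 1) i < 1) : (1 - N).det ≠ 0 := by
  intro hdet
  obtain ⟨v, hv0, hv⟩ := Matrix.exists_mulVec_eq_zero_iff.mpr hdet
  have hN1 : N *ᵥ v = v := by
    rw [Matrix.sub_mulVec, Matrix.one_mulVec, sub_eq_zero] at hv
    exact hv.symm
  have hfix : ∀ k : ℕ, N ^ k *ᵥ v = v := by
    intro k
    induction k with
    | zero => exact Matrix.one_mulVec v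
    | succ k ih => rw [pow_succ, ← Matrix.mulVec_mulVec, hN1, ih]
  obtain ⟨q, hq⟩ := Function.ne_iff.mp hv0
  obtain ⟨i, -, hi⟩ := exists_max_image univ (fun j => |v j|) ⟨q, mem_univ q⟩
  have hpos : 0 < |v i| := (abs_pos.mpr hq).trans_le (hi q (mem_univ q))
  have : |v i| < |v i| :=
    calc |v i| = |∑ j, (N ^ m) i j * v j| := by rw [← congrFun (hfix m) i]; rfl
      _ ≤ ∑ j, (N ^ m) i j * |v j| := by
          refine (abs_sum_le_sum_abs _ _).trans (le_of_eq (sum_congr rfl fun j _ => ?_))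
          rw [abs_mul, abs_of_nonneg (Matrix.pow_apply_nonneg hN m i j)]
      _ ≤ ∑ j, (N ^ m) i j * |v i| :=
          sum_le_sum fun j _ => mul_le_mul_of_nonneg_left (hi j (mem_univ j))
            (Matrix.pow_apply_nonneg hN m i j)
      _ = (N ^ m *ᵥ 1) i * |v i| := by simp [Matrix.mulVec, dotProduct, sum_mul]
      _ < |v i| := mul_lt_of_lt_one_left hpos (hm i)
  exact lt_irrefl _ this

lemma eq_sum_pow_mulVec_add {A : Matrix ι ι ℝ} {r u : ι → ℝ} (hu : u = r + A *ᵥ u) (τ : ℕ) :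
    u = ∑ t ∈ range τ, A ^ t *ᵥ r + A ^ τ *ᵥ u := by
  induction τ with
  | zero => simp
  | succ τ ih =>
    conv_lhs => rw [ih]
    conv_lhs => enter [2, 2]; rw [hu]
    rw [sum_range_succ, Matrix.mulVec_add, Matrix.mulVec_mulVec, ← pow_succ, add_assoc]

end NonnegMatrix

lemma sum_paths_eq_dotProduct_pow_mulVec {ι α : Type*} [Fintype ι] [DecidableEq ι]
    [CommSemiring α] (A : Matrix ι ι α) (g f : ι → α) (t : ℕ) :
    ∑ x : Fin (t + 1) → ι, g (x 0) * (∏ s : Fin t, A (x s.castSucc) (x s.succ)) *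
      f (x (Fin.last t)) = g ⬝ᵥ (A ^ t *ᵥ f) := by
  induction t generalizing g with
  | zero =>
    rw [← (Equiv.funUnique (Fin 1) ι).symm.sum_comp]
    simp [dotProduct]
  | succ t ih =>
    rw [← (Fin.consEquiv fun _ => ι).sum_comp, Fintype.sum_prod_type, sum_comm]
    simp only [Fin.consEquiv_apply, Fin.cons_zero, Fin.prod_univ_succ, Fin.castSucc_zero,
      Fin.cons_succ, ← Fin.succ_castSucc, ← Fin.succ_last]
    rw [pow_succ', ← Matrix.mulVec_mulVec, Matrix.dotProduct_mulVec, ← ih]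
    refine sum_congr rfl fun w _ => ?_
    simp only [Matrix.vecMul, dotProduct, sum_mul, mul_assoc]

lemma single_sub_single_mulVec {ι α : Type*} [Fintype ι] [DecidableEq ι] [CommRing α]
    (k ℓ : ι) (u : ι → α) :
    (Matrix.single k ℓ (1 : α) - Matrix.single k k 1) *ᵥ u = (u ℓ - u k) • Pi.single k 1 := by
  rw [Matrix.sub_mulVec, Matrix.single_mulVec_eq, Matrix.single_mulVec_eq, ← sub_smul,
    one_mul, one_mul]

lemma summable_of_add_le_mul {a : ℕ → ℝ} {m : ℕ} {B c : ℝ} (ha : ∀ t, 0 ≤ a t)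
    (haB : ∀ t, a t ≤ B) (hc1 : c < 1) (h : ∀ t, a (t + m) ≤ c * a t) :
    Summable a := by
  refine summable_of_sum_range_le ha (c := m * B / (1 - c)) fun N => ?_
  have hmono : ∑ t ∈ range N, a t ≤ ∑ t ∈ range (m + N), a t :=
    sum_le_sum_of_subset_of_nonneg (range_subset_range.2 (Nat.le_add_left N m))
      fun t _ _ => ha t
  have hsplit : ∑ t ∈ range (m + N), a t ≤ m * B + c * ∑ t ∈ range N, a t := by
    rw [sum_range_add, mul_sum]
    gcongr with t
    · simpa using sum_le_sum fun t (_ : t ∈ range m) => haB t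
    · simpa [add_comm] using h t
  rw [le_div_iff₀ (sub_pos.2 hc1)]
  linarith

lemma eq_one_of_one_le_sum_mul {ι : Type*} [Fintype ι] {p x : ι → ℝ} (hp : ∀ q, 0 ≤ p q)
    (hp1 : ∑ q, p q = 1) (hx : x ≤ 1) (h : 1 ≤ ∑ q, p q * x q) {b : ι} (hb : 0 < p b) :
    x b = 1 := by
  have hterm : ∀ q ∈ univ, 0 ≤ p q * (1 - x q) := fun q _ =>
    mul_nonneg (hp q) (sub_nonneg.2 (hx q))
  have hzero : ∑ q, p q * (1 - x q) = 0 := by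
    refine le_antisymm ?_ (sum_nonneg hterm)
    simpa only [mul_sub, mul_one, sum_sub_distrib, hp1, sub_nonpos] using h
  have hb' := (sum_eq_zero_iff_of_nonneg hterm).1 hzero b (mem_univ b)
  rw [mul_eq_zero, sub_eq_zero] at hb'
  exact (hb'.resolve_left hb.ne').symm

section Substochastic

variable {ι : Type*} [Fintype ι] [DecidableEq ι] {A : Matrix ι ι ℝ}

lemma pow_mulVec_one_le_one (hA : ∀ i j, 0 ≤ A i j) (hA1 : A *ᵥ 1 ≤ 1) (t : ℕ) :
    A ^ t *ᵥ 1 ≤ 1 := by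
  induction t with
  | zero => simp
  | succ t ih =>
    rw [pow_succ', ← Matrix.mulVec_mulVec]
    exact (mulVec_le_mulVec hA ih).trans hA1

lemma antitone_pow_mulVec_one (hA : ∀ i j, 0 ≤ A i j) (hA1 : A *ᵥ 1 ≤ 1) :
    Antitone fun t : ℕ => A ^ t *ᵥ 1 :=
  antitone_nat_of_succ_le fun t => by
    rw [pow_succ, ← Matrix.mulVec_mulVec]
    exact mulVec_le_mulVec (Matrix.pow_apply_nonneg hA t) hA1

lemma pow_add_mulVec_one_le (hA : ∀ i j, 0 ≤ A i j) {m : ℕ} {c : ℝ}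
    (hm : A ^ m *ᵥ 1 ≤ c • 1) (t : ℕ) : A ^ (t + m) *ᵥ 1 ≤ c • A ^ t *ᵥ 1 := by
  rw [pow_add, ← Matrix.mulVec_mulVec, ← Matrix.mulVec_smul]
  exact mulVec_le_mulVec (Matrix.pow_apply_nonneg hA t) hm

lemma summable_pow_mulVec_apply (hA : ∀ i j, 0 ≤ A i j) (hA1 : A *ᵥ 1 ≤ 1) {m : ℕ} {c : ℝ}
    (hc1 : c < 1) (hm : A ^ m *ᵥ 1 ≤ c • 1) {r : ι → ℝ} (hr : 0 ≤ r) (i : ι) :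
    Summable fun t => (A ^ t *ᵥ r) i := by
  have hAt := Matrix.pow_apply_nonneg hA
  have hρ : Summable fun t => (A ^ t *ᵥ 1) i :=
    summable_of_add_le_mul (fun t => by simpa using mulVec_le_mulVec (hAt t) zero_le_one i)
      (fun t => pow_mulVec_one_le_one hA hA1 t i) hc1 fun t => pow_add_mulVec_one_le hA hm t i
  have hr1 : r ≤ (∑ j, r j) • 1 := fun j => by
    simpa using single_le_sum (fun j _ => hr j) (mem_univ j)
  refine (hρ.mul_left (∑ j, r j)).of_nonneg_of_le (fun t => ?_) fun t => ?_
  · simpa using mulVec_le_mulVec (hAt t) hr i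
  · simpa [Matrix.mulVec_smul] using mulVec_le_mulVec (hAt t) hr1 i

end Substochastic

lemma hasDerivAt_of_eventually_eq_add_smul {𝕜 F : Type*} [NontriviallyNormedField 𝕜]
    [NormedAddCommGroup F] [NormedSpace 𝕜 F] {f g : 𝕜 → F} {a : 𝕜}
    (hf : ∀ᶠ x in 𝓝 a, f x = f a + (x - a) • g x) (hg : ContinuousAt g a) :
    HasDerivAt f (g a) a := by
  rw [hasDerivAt_iff_tendsto_slope]
  refine (hg.tendsto.mono_left nhdsWithin_le_nhds).congr' ?_
  filter_upwards [nhdsWithin_le_nhds hf, self_mem_nhdsWithin] with x hx hxa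
  rw [slope_def_module, hx, add_sub_cancel_left, smul_smul,
    inv_mul_cancel₀ (sub_ne_zero.2 hxa), one_smul]

lemma hasDerivAt_of_eq_add_mul_inv_apply {ι : Type*} [Fintype ι] [DecidableEq ι]
    {M : ℝ → Matrix ι ι ℝ} (hM : Continuous M) (h0 : (M 0).det ≠ 0) {f : ℝ → ℝ} {γ : ℝ}
    {i k : ι} (hf : ∀ ε, (M ε).det ≠ 0 → f ε = f 0 + ε * ((M ε)⁻¹ i k * γ)) :
    HasDerivAt f ((M 0)⁻¹ i k * γ) 0 := by
  have hinv : ContinuousAt (fun ε => (M ε)⁻¹) 0 :=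
    (continuousAt_matrix_inv _ (NormedRing.inverse_continuousAt (Units.mk0 _ h0))).comp
      hM.continuousAt
  refine hasDerivAt_of_eventually_eq_add_smul (g := fun ε => (M ε)⁻¹ i k * γ) ?_ ?_
  · filter_upwards [hM.matrix_det.continuousAt.eventually_ne h0] with ε hε
    simpa using hf ε hε
  · exact (((continuous_apply k).comp (continuous_apply i)).continuousAt.comp hinv).mul
      continuousAt_const

lemma lintegral_eq_sum_cylinder {κ σ α : Type*} [Fintype σ] [DecidableEq σ] [Fintype α]
    [MeasurableSpace α] [MeasurableSingletonClass α] (μ : Measure (κ → α)) (f : σ → κ)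
    (G : (σ → α) → ℝ≥0∞) :
    ∫⁻ ω, G (fun s => ω (f s)) ∂μ = ∑ v, G v * μ {ω | ∀ s, ω (f s) = v s} := by
  have hmeas : Measurable fun (ω : κ → α) (s : σ) => ω (f s) :=
    measurable_pi_lambda _ fun s => measurable_pi_apply (f s)
  rw [← lintegral_map (measurable_of_countable G) hmeas, lintegral_fintype]
  refine sum_congr rfl fun v _ => ?_
  rw [Measure.map_apply hmeas (measurableSet_singleton v)]
  congr 2
  ext ω
  simp [funext_iff]

/-- The transition matrix of the chain killed on leaving `D`: `(killedMat P D ^ t) i j` is the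
probability, from `i`, of staying in `D` at times `0, …, t - 1` and being at `j` at time `t`. -/
def killedMat (P : Matrix (Fin n) (Fin n) ℝ) (D : Finset (Fin n)) : Matrix (Fin n) (Fin n) ℝ :=
  fun i j => if i ∈ D then P i j else 0

section KilledChain

variable {P : Matrix (Fin n) (Fin n) ℝ} {D : Finset (Fin n)}

lemma killedMat_nonneg (hP : IsStochastic P) (i j : Fin n) : 0 ≤ killedMat P D i j := by
  unfold killedMat
  split_ifs
  exacts [hP.1 i j, le_rfl]

lemma killedMat_mulVec_apply (x : Fin n → ℝ) (i : Fin n) :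
    (killedMat P D *ᵥ x) i = if i ∈ D then (P *ᵥ x) i else 0 := by
  by_cases hi : i ∈ D <;> simp [killedMat, Matrix.mulVec, dotProduct, hi]

lemma killedMat_mulVec_one_le (hP : IsStochastic P) : killedMat P D *ᵥ 1 ≤ 1 := fun i => by
  rw [killedMat_mulVec_apply]
  split_ifs
  · simp [Matrix.mulVec, dotProduct, hP.2 i]
  · exact zero_le_one

/-- The set of states from which the killed chain survives forever with probability one is
closed under the transitions of `P` and misses `Dᶜ`, so by irreducibility it is empty. -/
lemma exists_pow_killedMat_mulVec_one_lt (hP : IsStochastic P) (hirr : IsIrreducible P)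
    (hDne : D ≠ univ) (i : Fin n) : ∃ t, (killedMat P D ^ t *ᵥ 1) i < 1 := by
  by_contra! hi
  set C : Set (Fin n) := {j | ∀ t, 1 ≤ (killedMat P D ^ t *ᵥ 1) j}
  have hC : ∀ a ∈ C, ∀ b, 0 < P a b → b ∈ C := by
    intro a ha b hab t
    have h1 := ha (t + 1)
    rw [pow_succ', ← Matrix.mulVec_mulVec, killedMat_mulVec_apply] at h1
    split_ifs at h1 with haD
    · exact (eq_one_of_one_le_sum_mul (hP.1 a) (hP.2 a)
        (pow_mulVec_one_le_one (killedMat_nonneg hP) (killedMat_mulVec_one_le hP) t) h1 hab).ge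
    · norm_num at h1
  obtain ⟨d, hd⟩ : ∃ d, d ∉ D := by simpa [eq_univ_iff_forall] using hDne
  obtain ⟨m, -, hm⟩ := hirr i d
  have hdC := mem_of_pow_apply_pos hP.1 hC m hi hm 1
  norm_num [killedMat_mulVec_apply, hd] at hdC

lemma exists_pow_killedMat_mulVec_one_le (hP : IsStochastic P) (hirr : IsIrreducible P)
    (hDne : D ≠ univ) : ∃ m, ∃ c : ℝ, c < 1 ∧ killedMat P D ^ m *ᵥ 1 ≤ c • 1 := by
  choose t ht using exists_pow_killedMat_mulVec_one_lt hP hirr hDne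
  set m := univ.sup t
  have hlt : ∀ i, (killedMat P D ^ m *ᵥ 1) i < 1 := fun i =>
    (antitone_pow_mulVec_one (killedMat_nonneg hP) (killedMat_mulVec_one_le hP)
      (le_sup (mem_univ i)) i).trans_lt (ht i)
  rcases isEmpty_or_nonempty (Fin n) with hn | hn
  · exact ⟨m, 0, one_pos, fun i => isEmptyElim i⟩
  · obtain ⟨i₀, hi₀⟩ := Finite.exists_max fun i => (killedMat P D ^ m *ᵥ 1) i
    exact ⟨m, _, hlt i₀, fun i => by simpa using hi₀ i⟩

lemma stopMat_pow_apply_of_mem {j : Fin n} (hj : j ∈ D) (m : ℕ) (i : Fin n) :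
    (stopMat P D ^ m) i j = (killedMat P D ^ m) i j := by
  induction m generalizing j with
  | zero => rfl
  | succ m ih =>
    simp only [pow_succ, Matrix.mul_apply]
    refine sum_congr rfl fun q _ => ?_
    by_cases hq : q ∈ D
    · simp [ih hq, stopMat, killedMat, hq]
    · have hqj : q ≠ j := fun h => hq (h ▸ hj)
      simp [stopMat, killedMat, hq, hqj]

lemma stopMat_pow_apply_of_notMem {a : Fin n} (ha : a ∉ D) (m : ℕ) (j : Fin n) :
    (stopMat P D ^ m) a j = (1 : Matrix (Fin n) (Fin n) ℝ) a j := by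
  induction m generalizing j with
  | zero => rfl
  | succ m ih => simp [pow_succ', Matrix.mul_apply, stopMat, ha, ih]

lemma det_one_sub_zeroD_stopMat_pow_ne_zero (hP : IsStochastic P) (hirr : IsIrreducible P)
    (hDne : D ≠ univ) {τ : ℕ} (hτ : 1 ≤ τ) :
    (1 - zeroD D (stopMat P D ^ τ)).det ≠ 0 := by
  have hQτ := Matrix.pow_apply_nonneg (killedMat_nonneg (D := D) hP) τ
  have hN0 : ∀ i j, 0 ≤ zeroD D (stopMat P D ^ τ) i j := fun i j => by
    unfold zeroD
    split_ifs with h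
    exacts [stopMat_pow_apply_of_mem h.2 τ i ▸ hQτ i j, le_rfl]
  have hNQ : ∀ i j, zeroD D (stopMat P D ^ τ) i j ≤ (killedMat P D ^ τ) i j := fun i j => by
    unfold zeroD
    split_ifs with h
    exacts [(stopMat_pow_apply_of_mem h.2 τ i).le, hQτ i j]
  obtain ⟨m, c, hc1, hm⟩ := exists_pow_killedMat_mulVec_one_le hP hirr hDne
  refine det_one_sub_ne_zero hN0 m fun i => ?_
  calc (zeroD D (stopMat P D ^ τ) ^ m *ᵥ 1) i ≤ (killedMat P D ^ (τ * m) *ᵥ 1) i := by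
        simpa [pow_mul, Matrix.mulVec, dotProduct] using
          sum_le_sum fun j (_ : j ∈ univ) => pow_apply_le_pow_apply hN0 hNQ m i j
    _ ≤ (killedMat P D ^ m *ᵥ 1) i :=
        antitone_pow_mulVec_one (killedMat_nonneg hP) (killedMat_mulVec_one_le hP)
          (Nat.le_mul_of_pos_left m hτ) i
    _ ≤ c := by simpa using hm i
    _ < 1 := hc1

end KilledChain

lemma le_exitT_iff {D : Finset (Fin n)} {ω : ℕ → Fin n} {t : ℕ} :
    (t : ℕ∞) ≤ exitT D ω ↔ ∀ s < t, ω s ∈ D := by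
  simp only [exitT, le_iInf_iff, Nat.cast_le]
  exact forall_congr' fun s => by rw [not_imp_comm, not_le]

lemma IsMarkovFamily.measure_prefix {P : Matrix (Fin n) (Fin n) ℝ}
    {Pr : Fin n → Measure (ℕ → Fin n)} (hPr : IsMarkovFamily P Pr) (i : Fin n) {m : ℕ}
    (v : Fin (m + 1) → Fin n) :
    Pr i {ω | ∀ s : Fin (m + 1), ω s = v s} =
      ENNReal.ofReal ((if v 0 = i then 1 else 0) * ∏ s : Fin m, P (v s.castSucc) (v s.succ)) := by
  have := hPr.1 i
  have hclamp : ∀ t ≤ m, ((Fin.clamp t m : Fin (m + 1)) : ℕ) = t := fun t ht => by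
    simp [Fin.clamp, ht]
  have hset : {ω : ℕ → Fin n | ∀ s : Fin (m + 1), ω s = v s} =
      {ω | ∀ t ≤ m, ω t = v (Fin.clamp t m)} := by
    ext ω
    refine ⟨fun h t ht => ?_, fun h s => ?_⟩
    · rw [h ⟨t, Nat.lt_succ_of_le ht⟩]
      exact congrArg v (Fin.ext (hclamp t ht).symm)
    · rw [h s (Nat.le_of_lt_succ s.isLt)]
      exact congrArg v (Fin.ext (hclamp s (Nat.le_of_lt_succ s.isLt)))
  rw [hset, ← ENNReal.ofReal_toReal (measure_ne_top _ _), hPr.2 i m fun t => v (Fin.clamp t m)]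
  congr 2
  rw [← Fin.prod_univ_eq_prod_range (fun t => P (v (Fin.clamp t m)) (v (Fin.clamp (t + 1) m)))]
  refine prod_congr rfl fun s _ => ?_
  congr 2 <;> exact Fin.ext (hclamp _ (by omega))

section Value

variable {P : Matrix (Fin n) (Fin n) ℝ} {Pr : Fin n → Measure (ℕ → Fin n)}
  {D : Finset (Fin n)} {R : Fin n → ℝ}

lemma lintegral_indicator_le_exitT (hPr : IsMarkovFamily P Pr) (hP : IsStochastic P)
    (hR : ∀ a, 0 ≤ R a) (t : ℕ) (i : Fin n) :
    ∫⁻ ω, Set.indicator {ω' : ℕ → Fin n | (t : ℕ∞) ≤ exitT D ω'}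
      (fun ω' => ENNReal.ofReal (R (ω' t))) ω ∂(Pr i) =
      ENNReal.ofReal ((killedMat P D ^ t *ᵥ R) i) := by
  let G : (Fin (t + 1) → Fin n) → ℝ≥0∞ := fun v =>
    if ∀ s : Fin t, v s.castSucc ∈ D then ENNReal.ofReal (R (v (Fin.last t))) else 0
  have hG : ∀ ω : ℕ → Fin n, Set.indicator {ω' | (t : ℕ∞) ≤ exitT D ω'}
      (fun ω' => ENNReal.ofReal (R (ω' t))) ω = G fun s => ω s := fun ω => by
    simp [G, Set.indicator_apply, le_exitT_iff, Fin.forall_iff]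
  have hpath : (killedMat P D ^ t *ᵥ R) i = ∑ v : Fin (t + 1) → Fin n,
      (if v 0 = i then 1 else 0) * (∏ s : Fin t, killedMat P D (v s.castSucc) (v s.succ)) *
        R (v (Fin.last t)) := by
    rw [sum_paths_eq_dotProduct_pow_mulVec (killedMat P D) (fun j => if j = i then 1 else 0)]
    simp [dotProduct]
  rw [lintegral_congr hG, lintegral_eq_sum_cylinder, hpath, ENNReal.ofReal_sum_of_nonneg]
  · refine sum_congr rfl fun v _ => ?_
    simp only [hPr.measure_prefix, G, killedMat, Fintype.prod_ite_zero]
    split_ifs with h <;>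
      simp [ENNReal.ofReal_mul (hR _), mul_comm]
  · exact fun v _ => mul_nonneg (mul_nonneg (by split_ifs <;> norm_num)
      (prod_nonneg fun s _ => killedMat_nonneg hP _ _)) (hR _)

lemma hasSum_valueR (hPr : IsMarkovFamily P Pr) (hP : IsStochastic P) (hirr : IsIrreducible P)
    (hDne : D ≠ univ) (hR : ∀ a, 0 ≤ R a) (i : Fin n) :
    HasSum (fun t => (killedMat P D ^ t *ᵥ R) i) (valueR Pr D R i) := by
  obtain ⟨m, c, hc1, hm⟩ := exists_pow_killedMat_mulVec_one_le hP hirr hDne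
  have hs := summable_pow_mulVec_apply (killedMat_nonneg hP) (killedMat_mulVec_one_le hP) hc1 hm
    (show 0 ≤ R from hR) i
  have h0 : ∀ t, 0 ≤ (killedMat P D ^ t *ᵥ R) i := fun t => by
    simpa using mulVec_le_mulVec (Matrix.pow_apply_nonneg (killedMat_nonneg hP) t)
      (show 0 ≤ R from hR) i
  rw [valueR, valueE]
  simp_rw [lintegral_indicator_le_exitT hPr hP hR]
  rw [← ENNReal.ofReal_tsum_of_nonneg h0 hs, ENNReal.toReal_ofReal (tsum_nonneg h0)]
  exact hs.hasSum

lemma valueR_eq_add_killedMat_mulVec (hPr : IsMarkovFamily P Pr) (hP : IsStochastic P)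
    (hirr : IsIrreducible P) (hDne : D ≠ univ) (hR : ∀ a, 0 ≤ R a) :
    (fun a => valueR Pr D R a) = R + killedMat P D *ᵥ fun a => valueR Pr D R a := by
  funext a
  have hu := hasSum_valueR hPr hP hirr hDne hR
  have h1 : HasSum (fun t => (killedMat P D ^ (t + 1) *ᵥ R) a) (valueR Pr D R a - R a) := by
    simpa using (hasSum_nat_add_iff' 1).2 (hu a)
  have h2 : HasSum (fun t => (killedMat P D ^ (t + 1) *ᵥ R) a)
      ((killedMat P D *ᵥ fun a => valueR Pr D R a) a) := by
    simp only [pow_succ', ← Matrix.mulVec_mulVec]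
    exact hasSum_sum (s := univ) fun j _ => (hu j).mul_left (killedMat P D a j)
  simp only [Pi.add_apply, ← h1.unique h2, add_sub_cancel]

lemma valueR_of_notMem (hPr : IsMarkovFamily P Pr) (hP : IsStochastic P)
    (hirr : IsIrreducible P) (hDne : D ≠ univ) (hR : ∀ a, 0 ≤ R a) {a : Fin n} (ha : a ∉ D) :
    valueR Pr D R a = R a := by
  simpa [killedMat_mulVec_apply, ha] using
    congrFun (valueR_eq_add_killedMat_mulVec hPr hP hirr hDne hR) a

lemma valueR_eq_RD_add_stopMat_mulVec (hPr : IsMarkovFamily P Pr) (hP : IsStochastic P)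
    (hirr : IsIrreducible P) (hDne : D ≠ univ) (hR : ∀ a, 0 ≤ R a) :
    (fun a => valueR Pr D R a) = RD D R + stopMat P D *ᵥ fun a => valueR Pr D R a := by
  funext a
  by_cases ha : a ∈ D
  · simpa [killedMat, RD, stopMat, ha, Matrix.mulVec, dotProduct] using
      congrFun (valueR_eq_add_killedMat_mulVec hPr hP hirr hDne hR) a
  · simp [RD, stopMat, ha, Matrix.mulVec, dotProduct]

lemma valueR_eq_sum_add_stopMat_pow_mulVec (hPr : IsMarkovFamily P Pr) (hP : IsStochastic P)
    (hirr : IsIrreducible P) (hDne : D ≠ univ) (hR : ∀ a, 0 ≤ R a) (τ : ℕ) :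
    (fun a => valueR Pr D R a) =
      (fun a => ∑ t ∈ range τ, ((stopMat P D ^ t).mulVec (RD D R)) a) +
        stopMat P D ^ τ *ᵥ fun a => valueR Pr D R a := by
  conv_lhs => rw [eq_sum_pow_mulVec_add (valueR_eq_RD_add_stopMat_mulVec hPr hP hirr hDne hR) τ]
  simp only [sum_fn]

end Value

section Perturbation

variable {D : Finset (Fin n)} {R : Fin n → ℝ} {A : Matrix (Fin n) (Fin n) ℝ}

lemma sub_zeroD_mulVec_congr (hA : ∀ a ∉ D, ∀ j ∈ D, A a j = 0) {x y : Fin n → ℝ}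
    (hxy : ∀ j ∉ D, x j = y j) : (A - zeroD D A) *ᵥ x = (A - zeroD D A) *ᵥ y := by
  funext a
  simp only [Matrix.mulVec, dotProduct]
  refine sum_congr rfl fun j _ => ?_
  by_cases hj : j ∈ D
  · have : (A - zeroD D A) a j = 0 := by by_cases ha : a ∈ D <;> simp [zeroD, ha, hj, hA]
    simp [this]
  · rw [hxy j hj]

lemma inv_one_sub_zeroD_mulVec (hA : ∀ a ∉ D, ∀ j ∈ D, A a j = 0) {u : Fin n → ℝ}
    (hu : ∀ a ∉ D, u a = R a) (hdet : (1 - zeroD D A).det ≠ 0) (c : Fin n → ℝ) :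
    (1 - zeroD D A)⁻¹ *ᵥ (c + A *ᵥ (fun a => if a ∈ D then 0 else R a)
      - zeroD D A *ᵥ (fun a => if a ∈ D then 0 else R a)) =
      u + (1 - zeroD D A)⁻¹ *ᵥ (c + A *ᵥ u - u) := by
  have hRu := sub_zeroD_mulVec_congr hA (x := fun a => if a ∈ D then 0 else R a) (y := u)
    fun j hj => by simp [hj, hu j hj]
  rw [Matrix.sub_mulVec, Matrix.sub_mulVec] at hRu
  have key : c + A *ᵥ (fun a => if a ∈ D then 0 else R a)
      - zeroD D A *ᵥ (fun a => if a ∈ D then 0 else R a) =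
      (1 - zeroD D A) *ᵥ u + (c + A *ᵥ u - u) := by
    rw [add_sub_assoc, hRu, Matrix.sub_mulVec, Matrix.one_mulVec]
    abel
  rw [key, Matrix.mulVec_add, Matrix.mulVec_mulVec,
    Matrix.nonsing_inv_mul _ (isUnit_iff_ne_zero.2 hdet), Matrix.one_mulVec]

end Perturbation

/-- `u` solves the unperturbed system, so the residual of `u` in the perturbed one is
`ε (e_k e_ℓᵀ - e_k e_kᵀ) u = ε (u ℓ - u k) e_k`. -/
lemma perturbedSol_eq {P : Matrix (Fin n) (Fin n) ℝ} {Pr : Fin n → Measure (ℕ → Fin n)}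
    {D : Finset (Fin n)} {R : Fin n → ℝ} (hPr : IsMarkovFamily P Pr) (hP : IsStochastic P)
    (hirr : IsIrreducible P) (hDne : D ≠ univ) (hR : ∀ a, 0 ≤ R a) {τ : ℕ} {k : Fin n}
    (hk : k ∈ D) (ℓ : Fin n) {ε : ℝ}
    (hdet : (1 - zeroD D (stopMat P D ^ τ +
      ε • (Matrix.single k ℓ (1 : ℝ) - Matrix.single k k 1))).det ≠ 0) :
    perturbedSol P D R τ k ℓ ε = (fun a => valueR Pr D R a) +
      (ε * (valueR Pr D R ℓ - valueR Pr D R k)) •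
        ((1 - zeroD D (stopMat P D ^ τ +
          ε • (Matrix.single k ℓ (1 : ℝ) - Matrix.single k k 1)))⁻¹ *ᵥ Pi.single k 1) := by
  have hA : ∀ a ∉ D, ∀ j ∈ D,
      (stopMat P D ^ τ + ε • (Matrix.single k ℓ (1 : ℝ) - Matrix.single k k 1) :
        Matrix (Fin n) (Fin n) ℝ) a j = 0 := by
    intro a ha j hj
    have hak : a ≠ k := fun h => ha (h ▸ hk)
    have haj : a ≠ j := fun h => ha (h ▸ hj)
    simp [stopMat_pow_apply_of_notMem ha, haj, hak.symm]
  have hc := valueR_eq_sum_add_stopMat_pow_mulVec hPr hP hirr hDne hR τ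
  unfold perturbedSol
  rw [inv_one_sub_zeroD_mulVec hA (fun a ha => valueR_of_notMem hPr hP hirr hDne hR ha) hdet,
    Matrix.add_mulVec, Matrix.smul_mulVec, single_sub_single_mulVec, ← add_assoc, ← hc,
    add_sub_cancel_left, smul_smul, Matrix.mulVec_smul]

theorem stmt14_general {n : ℕ} (D : Finset (Fin n))
    (hDne : D ≠ Finset.univ)
    (P : Matrix (Fin n) (Fin n) ℝ) (hP : IsStochastic P) (hirr : IsIrreducible P)
    (Pr : Fin n → Measure (ℕ → Fin n)) (hPr : IsMarkovFamily P Pr)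
    (R : Fin n → ℝ) (hR : ∀ a, 0 ≤ R a)
    (τ : ℕ) (hτ : 1 ≤ τ)
    (k : Fin n) (hk : k ∈ D) (ℓ : Fin n) (i : Fin n) :
    perturbedSol P D R τ k ℓ 0 = (fun a => valueR Pr D R a) ∧
    HasDerivAt (fun ε : ℝ => perturbedSol P D R τ k ℓ ε i)
      ((((1 : Matrix (Fin n) (Fin n) ℝ) - zeroD D (stopMat P D ^ τ))⁻¹) i k *
        (valueR Pr D R ℓ - valueR Pr D R k)) 0 := by
  set M : ℝ → Matrix (Fin n) (Fin n) ℝ := fun ε =>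
    1 - zeroD D (stopMat P D ^ τ + ε • (Matrix.single k ℓ (1 : ℝ) - Matrix.single k k 1))
  have hM : Continuous M := continuous_const.sub <| continuous_matrix fun a b => by
    simp only [zeroD]
    split_ifs <;> fun_prop
  have hM0 : M 0 = 1 - zeroD D (stopMat P D ^ τ) := by simp [M]
  have hdet0 : (M 0).det ≠ 0 := hM0 ▸ det_one_sub_zeroD_stopMat_pow_ne_zero hP hirr hDne hτ
  have hsol := fun ε (hε : (M ε).det ≠ 0) => perturbedSol_eq hPr hP hirr hDne hR hk ℓ hε
  refine ⟨by simpa using hsol 0 hdet0, ?_⟩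
  rw [← hM0]
  refine hasDerivAt_of_eq_add_mul_inv_apply hM hdet0 fun ε hε => ?_
  rw [hsol ε hε, hsol 0 hdet0]
  simp only [Pi.add_apply, Pi.smul_apply, smul_eq_mul, Matrix.mulVec_single_one,
    Matrix.col_apply, zero_mul, zero_smul, add_zero, Pi.zero_apply]
  ring

/-- Eqs. (37)–(38) of the paper: the solution of the Bellman system is a
differentiable function of the entry `S^τ(k,ℓ)`, with `v_0 = u` and
`d/dε v_ε(i)|_{ε=0} = (e_iᵀ (I - S_D^τ)⁻¹ e_k) (u(ℓ) - u(k))`. -/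
theorem stmt14 {n : ℕ} (hn : 2 ≤ n) (D : Finset (Fin n)) (hD : D.Nonempty)
    (hDne : D ≠ Finset.univ)
    (P : Matrix (Fin n) (Fin n) ℝ) (hP : IsStochastic P) (hirr : IsIrreducible P)
    (Pr : Fin n → Measure (ℕ → Fin n)) (hPr : IsMarkovFamily P Pr)
    (R : Fin n → ℝ) (hR : ∀ a, 0 ≤ R a)
    (τ : ℕ) (hτ : 1 ≤ τ)
    (k : Fin n) (hk : k ∈ D) (ℓ : Fin n) (hℓ : ℓ ≠ k) (i : Fin n) :
    perturbedSol P D R τ k ℓ 0 = (fun a => valueR Pr D R a) ∧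
    HasDerivAt (fun ε : ℝ => perturbedSol P D R τ k ℓ ε i)
      ((((1 : Matrix (Fin n) (Fin n) ℝ) - zeroD D (stopMat P D ^ τ))⁻¹) i k *
        (valueR Pr D R ℓ - valueR Pr D R k)) 0 :=
  stmt14_general D hDne P hP hirr Pr hPr R hR τ hτ k hk ℓ i

end RareTD
end
end

section
/- The committor satisfies u(2) = (1/p(1) + 1/p(2)) / ∑_{i=1}^{n−1} (1/p(i) + 1/p(i+1)); moreover, if n ≥ 13 then u(2) ≤ 2·e^{−(n−1)/(4π)}. -/
/-!
The chain is reversible with respect to `p`, and `P(i, i+1) = 1 / (2 p(i) r(i))` with edge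
resistance `r(i) = 1/p(i) + 1/p(i+1)`. Harmonicity of `u` at `i` says that the current
`(u(i+1) - u(i)) / r(i)` is the same on both edges at `i`, so it is constant along the chain and
the drop `u(2) - u(1)` is the share `r(1) / ∑ r` of the total drop `u(n) - u(1) = 1`.

For the bound write `1/p = Z e^{-w}` and `c = (n-1)/(4π)`. For `n ≥ 13` the step `4π/(n-1)` is at
most `π/3`, so `w(1), w(2) ≥ c/2` and `r(1) ≤ 2 Z e^{-c/2}`, while some `i` near the quarter of
the chain has `w(i) ≤ -c/2`, so `∑ r ≥ Z e^{c/2}`.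
-/

open Finset Filter
open scoped Real

noncomputable section

namespace RareChain

/-- The potential `w(i) = ((n-1)/(4π)) cos(4π(i-1)/(n-1))`. -/
def w (n i : ℕ) : ℝ :=
  ((n : ℝ) - 1) / (4 * Real.pi) * Real.cos (4 * Real.pi * ((i : ℝ) - 1) / ((n : ℝ) - 1))

/-- The normalizing constant `Z = ∑_{j=1}^n e^{w(j)}`. -/
def Z (n : ℕ) : ℝ := ∑ j ∈ Finset.Icc 1 n, Real.exp (w n j)

/-- The invariant probability vector `p(i) = e^{w(i)} / Z`. -/
def p (n i : ℕ) : ℝ := Real.exp (w n i) / Z n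

/-- The nearest-neighbor transition matrix of Section 3 of the paper (indices in `{1,…,n}`,
entries outside read as `0`). -/
def Pmat (n : ℕ) (i j : ℕ) : ℝ :=
  if i < 1 ∨ n < i ∨ j < 1 ∨ n < j then 0
  else if j = i + 1 then p n (i + 1) / (2 * (p n i + p n (i + 1)))
  else if j + 1 = i then p n (i - 1) / (2 * (p n i + p n (i - 1)))
  else if j = i then
    1 - (if i + 1 ≤ n then p n (i + 1) / (2 * (p n i + p n (i + 1))) else 0)
      - (if 2 ≤ i then p n (i - 1) / (2 * (p n i + p n (i - 1))) else 0)
  else 0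

section SeriesNetwork

variable {n : ℕ} {r u : ℕ → ℝ}

def current (r u : ℕ → ℝ) (i : ℕ) : ℝ := (u (i + 1) - u i) / r i

lemma current_eq_current_one
    (hcur : ∀ i, 2 ≤ i → i ≤ n - 1 → current r u i = current r u (i - 1)) :
    ∀ i, 1 ≤ i → i ≤ n - 1 → current r u i = current r u 1 := by
  intro i hi
  induction i, hi using Nat.le_induction with
  | base => exact fun _ => rfl
  | succ k hk ih =>
    intro hkn
    rw [hcur (k + 1) (by omega) hkn, Nat.add_sub_cancel, ih (by omega)]

lemma sub_eq_mul_div_sum_of_current_eq (hn : 2 ≤ n) (hr : ∀ i ∈ Icc 1 (n - 1), 0 < r i)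
    (hcur : ∀ i, 2 ≤ i → i ≤ n - 1 → current r u i = current r u (i - 1)) :
    u 2 - u 1 = r 1 * (u n - u 1) / ∑ i ∈ Icc 1 (n - 1), r i := by
  have hsum : 0 < ∑ i ∈ Icc 1 (n - 1), r i :=
    sum_pos hr ⟨1, mem_Icc.mpr ⟨le_rfl, by omega⟩⟩
  have hdrop : u n - u 1 = current r u 1 * ∑ i ∈ Icc 1 (n - 1), r i := calc
    u n - u 1 = ∑ i ∈ Icc 1 (n - 1), (u (i + 1) - u i) := by
      rw [sum_Icc_sub (by omega), Nat.sub_add_cancel (by omega)]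
    _ = ∑ i ∈ Icc 1 (n - 1), current r u 1 * r i := by
      refine sum_congr rfl fun i hi => ?_
      obtain ⟨hi1, hin⟩ := mem_Icc.mp hi
      rw [← current_eq_current_one hcur i hi1 hin, current, div_mul_cancel₀ _ (hr i hi).ne']
    _ = current r u 1 * ∑ i ∈ Icc 1 (n - 1), r i := by rw [mul_sum]
  rw [hdrop, mul_div_assoc, mul_div_cancel_right₀ _ hsum.ne', current,
    mul_div_cancel₀ _ (hr 1 (mem_Icc.mpr ⟨le_rfl, by omega⟩)).ne']

end SeriesNetwork

lemma Z_pos {n : ℕ} (hn : 1 ≤ n) : 0 < Z n :=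
  sum_pos (fun _ _ => Real.exp_pos _) ⟨1, mem_Icc.mpr ⟨le_rfl, hn⟩⟩

lemma p_pos {n : ℕ} (hn : 1 ≤ n) (i : ℕ) : 0 < p n i :=
  div_pos (Real.exp_pos _) (Z_pos hn)

def edgeResistance (n i : ℕ) : ℝ := 1 / p n i + 1 / p n (i + 1)

lemma edgeResistance_pos {n : ℕ} (hn : 1 ≤ n) (i : ℕ) : 0 < edgeResistance n i :=
  add_pos (one_div_pos.mpr (p_pos hn i)) (one_div_pos.mpr (p_pos hn (i + 1)))

section Harmonic

variable {n i : ℕ}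

lemma Pmat_succ (hi : 1 ≤ i) (hin : i + 1 ≤ n) :
    Pmat n i (i + 1) = p n (i + 1) / (2 * (p n i + p n (i + 1))) := by
  rw [Pmat, if_neg (by omega), if_pos rfl]

lemma Pmat_pred (hi : 2 ≤ i) (hin : i ≤ n) :
    Pmat n i (i - 1) = p n (i - 1) / (2 * (p n i + p n (i - 1))) := by
  rw [Pmat, if_neg (by omega), if_neg (by omega), if_pos (by omega)]

lemma Pmat_self (hi : 2 ≤ i) (hin : i + 1 ≤ n) :
    Pmat n i i = 1 - Pmat n i (i + 1) - Pmat n i (i - 1) := by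
  rw [Pmat_succ (by omega) hin, Pmat_pred hi (by omega), Pmat, if_neg (by omega),
    if_neg (by omega), if_neg (by omega), if_pos rfl, if_pos hin, if_pos hi]

lemma sum_Pmat_mul (u : ℕ → ℝ) (hi : 2 ≤ i) (hin : i + 1 ≤ n) :
    ∑ j ∈ Icc 1 n, Pmat n i j * u j
      = u i + Pmat n i (i + 1) * (u (i + 1) - u i) + Pmat n i (i - 1) * (u (i - 1) - u i) := by
  have hsupp : ∀ j ∈ Icc 1 n, j ∉ ({i - 1, i, i + 1} : Finset ℕ) → Pmat n i j * u j = 0 := by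
    intro j hj hji
    simp only [mem_insert, mem_singleton, not_or] at hji
    rw [mem_Icc] at hj
    rw [Pmat, if_neg (by omega), if_neg (by omega), if_neg (by omega), if_neg (by omega), zero_mul]
  have hsub : ({i - 1, i, i + 1} : Finset ℕ) ⊆ Icc 1 n := by
    intro j hj
    simp only [mem_insert, mem_singleton] at hj
    rw [mem_Icc]; omega
  rw [← sum_subset hsub hsupp, sum_insert (by simp; omega), sum_insert (by simp), sum_singleton,
    Pmat_self hi hin]
  ring

lemma current_eq_of_harmonic {u : ℕ → ℝ} (hi : 2 ≤ i) (hin : i + 1 ≤ n)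
    (hu : u i = ∑ j ∈ Icc 1 n, Pmat n i j * u j) :
    current (edgeResistance n) u i = current (edgeResistance n) u (i - 1) := by
  have hp := p_pos (n := n) (by omega)
  have := hp i; have := hp (i - 1); have := hp (i + 1)
  rw [sum_Pmat_mul u hi hin, Pmat_succ (by omega) hin, Pmat_pred hi (by omega)] at hu
  rw [current, current, edgeResistance, edgeResistance, Nat.sub_add_cancel (by omega)]
  field_simp at hu ⊢
  linear_combination -hu

end Harmonic

theorem committor_two_eq {n : ℕ} (hn : 2 ≤ n) {u : ℕ → ℝ} (hu1 : u 1 = 0) (hun : u n = 1)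
    (hharm : ∀ i, 2 ≤ i → i ≤ n - 1 → u i = ∑ j ∈ Icc 1 n, Pmat n i j * u j) :
    u 2 = edgeResistance n 1 / ∑ i ∈ Icc 1 (n - 1), edgeResistance n i := by
  have h := sub_eq_mul_div_sum_of_current_eq (u := u) hn
    (fun i _ => edgeResistance_pos (by omega) i)
    (fun i hi hin => current_eq_of_harmonic hi (by omega) (hharm i hi hin))
  rwa [hu1, hun, sub_zero, sub_zero, mul_one] at h

lemma half_le_cos_four_pi_div {x : ℝ} (hx : 12 ≤ x) : 1 / 2 ≤ Real.cos (4 * π / x) := by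
  rw [← Real.cos_pi_div_three]
  refine Real.cos_le_cos_of_nonneg_of_le_pi (by positivity) (by linarith [Real.pi_pos]) ?_
  rw [div_le_div_iff₀ (by linarith) (by norm_num)]
  nlinarith [Real.pi_pos]

lemma exists_cos_four_pi_mul_div_le_neg_half {N : ℕ} (hN : 12 ≤ N) :
    ∃ m < N, Real.cos (4 * π * m / N) ≤ -(1 / 2) := by
  -- `4 * (N / 4) / N` lies in `[1 - 3 / N, 1]`, so the angle is within `π / 4` below `π`.
  refine ⟨N / 4, by omega, ?_⟩
  have hlo : (N : ℝ) ≤ 4 * (N / 4 : ℕ) + 3 := by exact_mod_cast (by omega : N ≤ 4 * (N / 4) + 3)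
  have hhi : 4 * ((N / 4 : ℕ) : ℝ) ≤ N := by exact_mod_cast Nat.mul_div_le N 4
  have hN' : (12 : ℝ) ≤ N := by exact_mod_cast hN
  rw [← Real.cos_pi_div_three, ← Real.cos_pi_sub]
  refine Real.cos_le_cos_of_nonneg_of_le_pi (by linarith [Real.pi_pos]) ?_ ?_
  · rw [div_le_iff₀ (by linarith)]
    nlinarith [Real.pi_pos]
  · rw [le_div_iff₀ (by linarith)]
    nlinarith [Real.pi_pos]

lemma one_div_p (n i : ℕ) : 1 / p n i = Z n * Real.exp (-w n i) := by
  rw [p, one_div_div, Real.exp_neg, div_eq_mul_inv]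

lemma edgeResistance_eq (n i : ℕ) :
    edgeResistance n i = Z n * (Real.exp (-w n i) + Real.exp (-w n (i + 1))) := by
  rw [edgeResistance, one_div_p, one_div_p, mul_add]

section Bound

variable {n : ℕ}

lemma w_one : w n 1 = ((n : ℝ) - 1) / (4 * π) := by
  simp [w]

lemma w_two_ge (hn : 13 ≤ n) : ((n : ℝ) - 1) / (4 * π) / 2 ≤ w n 2 := by
  have hn' : (12 : ℝ) ≤ (n : ℝ) - 1 := by
    have : (13 : ℝ) ≤ n := by exact_mod_cast hn
    linarith
  have hcos := half_le_cos_four_pi_div hn'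
  rw [w, show ((2 : ℕ) : ℝ) - 1 = 1 by norm_num, mul_one]
  have : 0 ≤ ((n : ℝ) - 1) / (4 * π) := by positivity
  nlinarith

lemma exists_w_le (hn : 13 ≤ n) :
    ∃ i ∈ Icc 1 (n - 1), w n i ≤ -(((n : ℝ) - 1) / (4 * π) / 2) := by
  obtain ⟨m, hm, hcos⟩ := exists_cos_four_pi_mul_div_le_neg_half (N := n - 1) (by omega)
  refine ⟨m + 1, mem_Icc.mpr ⟨by omega, by omega⟩, ?_⟩
  have hn' : (1 : ℝ) ≤ n := by exact_mod_cast (by omega : 1 ≤ n)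
  have hc : 0 ≤ ((n : ℝ) - 1) / (4 * π) := div_nonneg (by linarith) (by positivity)
  rw [Nat.cast_sub (by omega), Nat.cast_one] at hcos
  rw [w, Nat.cast_add_one, add_sub_cancel_right]
  nlinarith

theorem edgeResistance_one_div_sum_le (hn : 13 ≤ n) :
    edgeResistance n 1 / ∑ i ∈ Icc 1 (n - 1), edgeResistance n i
      ≤ 2 * Real.exp (-((n : ℝ) - 1) / (4 * π)) := by
  obtain ⟨i, hi, hwi⟩ := exists_w_le hn
  set c := ((n : ℝ) - 1) / (4 * π)
  have hZ := Z_pos (n := n) (by omega)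
  have hn' : (13 : ℝ) ≤ n := by exact_mod_cast hn
  have hc : 0 < c := div_pos (by linarith) (by positivity)
  have hnum : edgeResistance n 1 ≤ Z n * (2 * Real.exp (-(c / 2))) := by
    rw [edgeResistance_eq, w_one]
    gcongr
    have : Real.exp (-w n 2) ≤ Real.exp (-(c / 2)) := by gcongr; exact w_two_ge hn
    have : Real.exp (-c) ≤ Real.exp (-(c / 2)) := by gcongr; linarith
    linarith
  have hden : Z n * Real.exp (c / 2) ≤ ∑ i ∈ Icc 1 (n - 1), edgeResistance n i := calc
    Z n * Real.exp (c / 2) ≤ Z n * Real.exp (-w n i) := by gcongr; linarith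
    _ ≤ edgeResistance n i := by
      rw [edgeResistance_eq]
      gcongr
      exact le_add_of_nonneg_right (Real.exp_pos _).le
    _ ≤ ∑ i ∈ Icc 1 (n - 1), edgeResistance n i :=
      single_le_sum (fun j _ => (edgeResistance_pos (by omega) j).le) hi
  calc edgeResistance n 1 / ∑ i ∈ Icc 1 (n - 1), edgeResistance n i
      ≤ Z n * (2 * Real.exp (-(c / 2))) / (Z n * Real.exp (c / 2)) :=
        div_le_div₀ (by positivity) hnum (by positivity) hden
    _ = 2 * Real.exp (-c) := by
        rw [mul_div_mul_left _ _ hZ.ne', mul_div_assoc, ← Real.exp_sub,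
          show -(c / 2) - c / 2 = -c by ring]
    _ = 2 * Real.exp (-((n : ℝ) - 1) / (4 * π)) := by rw [neg_div]

end Bound

/-- Eq. (8) of the paper and its proof in Appendix B: the committor satisfies
the explicit formula `u(2) = (1/p(1) + 1/p(2)) / ∑_{i=1}^{n-1} (1/p(i) + 1/p(i+1))`, and is
exponentially small: `u(2) ≤ 2 e^{-(n-1)/(4π)}` for `n ≥ 13`. -/
theorem stmt17 (n : ℕ) (hn : 3 ≤ n) (u : ℕ → ℝ)
    (hu1 : u 1 = 0) (hun : u n = 1)
    (hharm : ∀ i, 2 ≤ i → i ≤ n - 1 → u i = ∑ j ∈ Finset.Icc 1 n, Pmat n i j * u j) :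
    u 2 = (1 / p n 1 + 1 / p n 2) /
        ∑ i ∈ Finset.Icc 1 (n - 1), (1 / p n i + 1 / p n (i + 1)) ∧
    (13 ≤ n → u 2 ≤ 2 * Real.exp (-((n : ℝ) - 1) / (4 * Real.pi))) := by
  have hformula := committor_two_eq (by omega) hu1 hun hharm
  refine ⟨hformula, fun hn13 => ?_⟩
  rw [hformula]
  exact edgeResistance_one_div_sum_le hn13

end RareChain
end
end
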